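/- Let f : ℝ → ℝ be continuous with sign condition f(s)s ≥ 0 and satisfy 0 ≤ F(s) ≤ f(s)s for all s, where F is the antiderivative of f vanishing at 0. Let f_k be the truncation of f at level k and F_k its antiderivative vanishing at 0. Then 0 ≤ F_k(s) ≤ f_k(s)·s + f(k)k + |f(-k)|k for all s ∈ ℝ; moreover for |s| ≤ k one has exactly 0 ≤ F_k(s) ≤ f_k(s)·s. -/

import Mathlib

/-!
Write `c = max (-k) (min s k)` for the point of `[-k, k]` nearest to `s`. Since `f_k` is
constant equal to `f c` between `c` and `s`, we get `F_k(s) = F(c) + (s - c) f(c)`.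
The hypothesis `F(c) ≤ f(c) c` then gives the sharp bound `F_k(s) ≤ f(c) s = f_k(s) s` for
every `s`, not only for `|s| ≤ k`; and `F(c) ≥ 0` together with `(s - c) f(c) ≥ 0` (when
`s ≠ c`, `s - c` has the sign of `c = ±k`, and so does `f(c)`) gives `F_k(s) ≥ 0`.
The correction terms are nonnegative.
-/

noncomputable def trunc (f : ℝ → ℝ) (k : ℝ) (s : ℝ) : ℝ :=
  if |s| ≤ k then f s else if k < s then f k else f (-k)

noncomputable def truncF (f : ℝ → ℝ) (k : ℝ) (l : ℝ) : ℝ :=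
  ∫ s in (0:ℝ)..l, trunc f k s

def clamp (k s : ℝ) : ℝ := max (-k) (min s k)

section Clamp

variable {k s : ℝ}

theorem clamp_of_abs_le (hs : |s| ≤ k) : clamp k s = s := by
  obtain ⟨h₁, h₂⟩ := abs_le.mp hs
  simp [clamp, h₁, h₂]

theorem clamp_of_le (hk : 0 ≤ k) (hks : k ≤ s) : clamp k s = k := by
  rw [clamp, min_eq_right hks, max_eq_right (by linarith)]

theorem clamp_of_le_neg (hsk : s ≤ -k) : clamp k s = -k :=
  max_eq_left (min_le_of_left_le hsk)

theorem abs_clamp_le (hk : 0 ≤ k) : |clamp k s| ≤ k :=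
  abs_le.mpr ⟨le_max_left _ _, max_le (by linarith) (min_le_right _ _)⟩

theorem clamp_eq_of_mem_uIcc {t : ℝ} (ht : t ∈ Set.uIcc (clamp k s) s) :
    clamp k t = clamp k s := by
  simp only [Set.mem_uIcc, clamp, max_def, min_def] at ht ⊢
  rcases ht with ⟨_, _⟩ | ⟨_, _⟩ <;> split_ifs at * <;> linarith

theorem sub_clamp_mul_nonneg (hk : 0 < k) {y : ℝ} (hy : 0 ≤ y * clamp k s) :
    0 ≤ (s - clamp k s) * y := by
  rcases lt_or_ge k s with hks | hks
  · rw [clamp_of_le hk.le hks.le] at hy ⊢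
    exact mul_nonneg (by linarith) (nonneg_of_mul_nonneg_left hy hk)
  rcases lt_or_ge s (-k) with hsk | hsk
  · rw [clamp_of_le_neg hsk.le] at hy ⊢
    exact mul_nonneg_of_nonpos_of_nonpos (by linarith) (by nlinarith)
  · simp [clamp_of_abs_le (abs_le.mpr ⟨hsk, hks⟩)]

end Clamp

section Truncation

variable {f : ℝ → ℝ} {k : ℝ}

theorem trunc_eq_comp_clamp (hk : 0 ≤ k) (s : ℝ) : trunc f k s = f (clamp k s) := by
  unfold trunc
  split_ifs with hs hks
  · rw [clamp_of_abs_le hs]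
  · rw [clamp_of_le hk hks.le]
  · have hsk : s < -k := by
      by_contra! h
      exact hs (abs_le.mpr ⟨h, not_lt.mp hks⟩)
    rw [clamp_of_le_neg hsk.le]

theorem continuous_trunc (hf : Continuous f) (hk : 0 ≤ k) : Continuous (trunc f k) := by
  rw [funext (trunc_eq_comp_clamp hk)]
  exact hf.comp (continuous_const.max (continuous_id.min continuous_const))

theorem truncF_eq (hf : Continuous f) (hk : 0 ≤ k) (s : ℝ) :
    truncF f k s = (∫ t in (0:ℝ)..clamp k s, f t) + (s - clamp k s) * f (clamp k s) := by
  have hint := (continuous_trunc hf hk).intervalIntegrable (μ := MeasureTheory.volume)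
  rw [truncF, ← intervalIntegral.integral_add_adjacent_intervals (hint 0 (clamp k s)) (hint _ s)]
  congr 1
  · have hsub : Set.uIcc 0 (clamp k s) ⊆ Set.Icc (-k) k :=
      Set.uIcc_subset_Icc ⟨by linarith, hk⟩ (abs_le.mp (abs_clamp_le hk))
    refine intervalIntegral.integral_congr fun t ht ↦ ?_
    rw [trunc_eq_comp_clamp hk, clamp_of_abs_le (abs_le.mpr (hsub ht))]
  · rw [intervalIntegral.integral_congr (g := fun _ ↦ f (clamp k s)),
      intervalIntegral.integral_const, smul_eq_mul]
    intro t ht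
    rw [trunc_eq_comp_clamp hk, clamp_eq_of_mem_uIcc ht]

theorem truncF_le_trunc_mul (hf : Continuous f)
    (hF : ∀ s : ℝ, (∫ t in (0:ℝ)..s, f t) ≤ f s * s) (hk : 0 ≤ k) (s : ℝ) :
    truncF f k s ≤ trunc f k s * s := by
  rw [truncF_eq hf hk, trunc_eq_comp_clamp hk]
  linarith [hF (clamp k s)]

theorem truncF_nonneg (hf : Continuous f) (hF₀ : ∀ s : ℝ, 0 ≤ ∫ t in (0:ℝ)..s, f t)
    (hF : ∀ s : ℝ, (∫ t in (0:ℝ)..s, f t) ≤ f s * s) (hk : 0 < k) (s : ℝ) :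
    0 ≤ truncF f k s := by
  rw [truncF_eq hf hk.le]
  linarith [hF₀ (clamp k s), sub_clamp_mul_nonneg (s := s) hk ((hF₀ _).trans (hF _))]

end Truncation

theorem stmt_18_general (f : ℝ → ℝ) (hf : Continuous f)
    (hF : ∀ s : ℝ, 0 ≤ ∫ t in (0:ℝ)..s, f t ∧ (∫ t in (0:ℝ)..s, f t) ≤ f s * s)
    (k : ℕ) (hk : 1 ≤ k) :
    (∀ s : ℝ, 0 ≤ truncF f k s ∧
      truncF f k s ≤ trunc f k s * s + f k * k + |f (-(k : ℝ))| * k) ∧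
    (∀ s : ℝ, |s| ≤ k → truncF f k s ≤ trunc f k s * s) := by
  have hk₀ : (0 : ℝ) < k := by exact_mod_cast hk
  have hF₀ s := (hF s).1
  have hF₁ s := (hF s).2
  have hsharp := truncF_le_trunc_mul hf hF₁ hk₀.le
  have hfk : 0 ≤ f k * k := (hF₀ k).trans (hF₁ k)
  have hfk' : 0 ≤ |f (-(k : ℝ))| * k := by positivity
  refine ⟨fun s ↦ ⟨truncF_nonneg hf hF₀ hF₁ hk₀ s, ?_⟩, fun s _ ↦ hsharp s⟩
  linarith [hsharp s]

theorem stmt_18 (f : ℝ → ℝ) (hf : Continuous f)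
    (hsign : ∀ s : ℝ, 0 ≤ f s * s)
    (hF : ∀ s : ℝ, 0 ≤ ∫ t in (0:ℝ)..s, f t ∧ (∫ t in (0:ℝ)..s, f t) ≤ f s * s)
    (k : ℕ) (hk : 1 ≤ k) :
    (∀ s : ℝ, 0 ≤ truncF f k s ∧
      truncF f k s ≤ trunc f k s * s + f k * k + |f (-(k : ℝ))| * k) ∧
    (∀ s : ℝ, |s| ≤ k → truncF f k s ≤ trunc f k s * s) :=
  stmt_18_general f hf hF k hk
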